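/- For Y ~ N(θ,1) truncated to |Y| ≥ c and an observed value x ≥ c, the conditional MLE θ̂(x) (the solution of x = E_θ[X]) satisfies θ̂(x) ≤ x, and θ̂(x)/x → 1 as x → ∞; i.e., the amount of shrinkage x - θ̂(x) tends to 0 as the observation moves far from the threshold. -/

import Mathlib

open MeasureTheory Set Filter

noncomputable def phi (x : ℝ) : ℝ := (Real.sqrt (2 * Real.pi))⁻¹ * Real.exp (-x ^ 2 / 2)

noncomputable def Phi (x : ℝ) : ℝ := ∫ t in Iic x, phi t

/-- `Q_c(θ) = Φ(θ-c) + Φ(-θ-c) = P(|N(θ,1)| ≥ c)`. -/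
noncomputable def Qc (c θ : ℝ) : ℝ := Phi (θ - c) + Phi (-θ - c)

/-- Mean of the two-sided truncated normal with location `θ`,
truncation set `{|x| ≥ c}`. -/
noncomputable def condMean (c θ : ℝ) : ℝ :=
  θ + (phi (c - θ) - phi (-c - θ)) / Qc c θ

/-!
Write `x = condMean c θ = θ + (φ(c-θ) - φ(-c-θ)) / Q_c(θ)`. For `c > 0` the correction term
has the sign of `θ`, so `x ≥ c > 0` forces `θ > 0` and then `θ ≤ x`. For `θ ≥ 0` we have
`Q_c(θ) ≥ Φ(-c)`, so the shrinkage `x - θ` is at most `φ(θ - c) / Φ(-c) ≤ φ(0) / Φ(-c)`.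
Hence `θ ≥ x - φ(0) / Φ(-c) → ∞`, and feeding this back, `x - θ ≤ φ(θ - c) / Φ(-c) → 0`.
-/

section StandardNormal

lemma phi_eq_gaussianPDFReal : phi = ProbabilityTheory.gaussianPDFReal 0 1 := by
  ext x
  simp [phi, ProbabilityTheory.gaussianPDFReal]

lemma phi_pos (x : ℝ) : 0 < phi x := by
  rw [phi_eq_gaussianPDFReal]
  exact ProbabilityTheory.gaussianPDFReal_pos 0 1 x one_ne_zero

lemma integrable_phi : Integrable phi := by
  rw [phi_eq_gaussianPDFReal]
  exact ProbabilityTheory.integrable_gaussianPDFReal 0 1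

lemma phi_le_phi_of_sq_le {a b : ℝ} (h : b ^ 2 ≤ a ^ 2) : phi a ≤ phi b := by
  unfold phi
  gcongr

lemma phi_le_phi_zero (x : ℝ) : phi x ≤ phi 0 :=
  phi_le_phi_of_sq_le (by rw [zero_pow two_ne_zero]; exact sq_nonneg x)

lemma phi_neg (x : ℝ) : phi (-x) = phi x := by
  simp [phi]

lemma tendsto_phi_atTop : Tendsto phi atTop (nhds 0) := by
  have hexp : Tendsto (fun x : ℝ => Real.exp (-x ^ 2 / 2)) atTop (nhds 0) :=
    Real.tendsto_exp_atBot.comp <| (tendsto_neg_atTop_atBot.comp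
      (tendsto_pow_atTop two_ne_zero)).atBot_div_const two_pos
  rw [← mul_zero (Real.sqrt (2 * Real.pi))⁻¹]
  exact hexp.const_mul _

lemma Phi_pos (x : ℝ) : 0 < Phi x := by
  rw [Phi, setIntegral_pos_iff_support_of_nonneg_ae
    (Eventually.of_forall fun t => (phi_pos t).le) integrable_phi.integrableOn]
  have hsupp : Function.support phi = univ :=
    Function.support_eq_univ fun t => (phi_pos t).ne'
  simp [hsupp, Real.volume_Iic]

lemma Phi_mono : Monotone Phi := fun _ _ h =>
  setIntegral_mono_set integrable_phi.integrableOn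
    (Eventually.of_forall fun t => (phi_pos t).le) (Iic_subset_Iic.2 h).eventuallyLE

lemma Qc_pos (c θ : ℝ) : 0 < Qc c θ :=
  add_pos (Phi_pos _) (Phi_pos _)

end StandardNormal

section TruncatedMean

variable {c θ : ℝ}

lemma condMean_le_self (hc : 0 ≤ c) (hθ : θ ≤ 0) : condMean c θ ≤ θ := by
  have hnum : phi (c - θ) - phi (-c - θ) ≤ 0 :=
    sub_nonpos.2 (phi_le_phi_of_sq_le (by nlinarith))
  have := div_nonpos_of_nonpos_of_nonneg hnum (Qc_pos c θ).le
  rw [condMean]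
  linarith

lemma self_le_condMean (hc : 0 ≤ c) (hθ : 0 ≤ θ) : θ ≤ condMean c θ := by
  have hnum : 0 ≤ phi (c - θ) - phi (-c - θ) :=
    sub_nonneg.2 (phi_le_phi_of_sq_le (by nlinarith))
  have := div_nonneg hnum (Qc_pos c θ).le
  rw [condMean]
  linarith

lemma pos_of_le_condMean (hc : 0 < c) (h : c ≤ condMean c θ) : 0 < θ := by
  by_contra! hθ
  linarith [condMean_le_self hc.le hθ]

lemma Phi_neg_le_Qc (hθ : 0 ≤ θ) : Phi (-c) ≤ Qc c θ := by
  have := Phi_mono (show -c ≤ θ - c by linarith)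
  rw [Qc]
  linarith [Phi_pos (-θ - c)]

lemma condMean_sub_self_le (hθ : 0 ≤ θ) :
    condMean c θ - θ ≤ phi (θ - c) / Phi (-c) := by
  rw [condMean, add_sub_cancel_left, ← phi_neg (θ - c), neg_sub]
  calc (phi (c - θ) - phi (-c - θ)) / Qc c θ
      ≤ phi (c - θ) / Qc c θ := by
        gcongr
        · exact (Qc_pos c θ).le
        · linarith [phi_pos (-c - θ)]
    _ ≤ phi (c - θ) / Phi (-c) := by
        gcongr
        exacts [(phi_pos _).le, Phi_pos _, Phi_neg_le_Qc hθ]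

end TruncatedMean

lemma tendsto_div_self_of_tendsto_sub {f : ℝ → ℝ} {a : ℝ}
    (h : Tendsto (fun x => x - f x) atTop (nhds a)) :
    Tendsto (fun x => f x / x) atTop (nhds 1) := by
  have hlim : Tendsto (fun x => 1 - (x - f x) * x⁻¹) atTop (nhds 1) := by
    simpa using tendsto_const_nhds.sub (h.mul tendsto_inv_atTop_zero)
  refine hlim.congr' ?_
  filter_upwards [eventually_ne_atTop 0] with x hx
  field_simp
  ring

/-- for observed values `x ≥ c`, the conditional MLE `θ̂(x)`
(the solution of `x = E_θ[X]`) satisfies `θ̂(x) ≤ x`, and `θ̂(x)/x → 1` as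
`x → ∞`; the amount of shrinkage `x - θ̂(x)` tends to `0`. -/
theorem conditional_mle_shrinkage_vanishes (c : ℝ) (hc : 0 < c)
    (θhat : ℝ → ℝ) (hsol : ∀ x : ℝ, c ≤ x → x = condMean c (θhat x)) :
    (∀ x : ℝ, c ≤ x → θhat x ≤ x) ∧
    Tendsto (fun x : ℝ => θhat x / x) atTop (nhds 1) ∧
    Tendsto (fun x : ℝ => x - θhat x) atTop (nhds 0) := by
  have hpos (x) (hx : c ≤ x) : 0 < θhat x :=
    pos_of_le_condMean hc (hsol x hx ▸ hx)
  have hle (x) (hx : c ≤ x) : θhat x ≤ x := by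
    simpa only [← hsol x hx] using self_le_condMean hc.le (hpos x hx).le
  have hshrink (x) (hx : c ≤ x) : x - θhat x ≤ phi (θhat x - c) / Phi (-c) := by
    simpa only [← hsol x hx] using condMean_sub_self_le (c := c) (hpos x hx).le
  have htend : Tendsto (fun x => θhat x - c) atTop atTop := by
    refine tendsto_atTop_add_const_right _ _ (tendsto_atTop_mono' _ ?_
      (tendsto_atTop_add_const_right _ (-(phi 0 / Phi (-c))) tendsto_id))
    filter_upwards [eventually_ge_atTop c] with x hx
    have : phi (θhat x - c) / Phi (-c) ≤ phi 0 / Phi (-c) :=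
      div_le_div_of_nonneg_right (phi_le_phi_zero _) (Phi_pos _).le
    linarith [hshrink x hx, show id x = x from rfl]
  have hsub : Tendsto (fun x => x - θhat x) atTop (nhds 0) := by
    refine tendsto_of_tendsto_of_tendsto_of_le_of_le' tendsto_const_nhds
      (by simpa using (tendsto_phi_atTop.comp htend).div_const (Phi (-c))) ?_ ?_
    all_goals filter_upwards [eventually_ge_atTop c] with x hx
    exacts [sub_nonneg.2 (hle x hx), hshrink x hx]
  exact ⟨hle, tendsto_div_self_of_tendsto_sub hsub, hsub⟩
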